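/- Let L be a bounded distributive lattice and let f, g : Lⁿ → L be lattice polynomial functions. If f(x) = g(x) for every x ∈ {0,1}ⁿ (i.e., every vector all of whose components equal the bottom element 0 or the top element 1), then f = g. -/

import Mathlib

open Classical

variable {L : Type*}

section Defs

variable [DistribLattice L] [BoundedOrder L]

/-- The ternary median term. -/
def med (x y z : L) : L := (x ⊔ y) ⊓ (x ⊔ z) ⊓ (y ⊔ z)

/-- Lattice polynomial functions of arity `n`: the smallest class of functions
`(Fin n → L) → L` containing projections and constants and closed under
pointwise binary meets and joins. -/
inductive IsLatticePolynomial {n : ℕ} : ((Fin n → L) → L) → Prop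
  | proj (k : Fin n) : IsLatticePolynomial fun x => x k
  | const (c : L) : IsLatticePolynomial fun _ => c
  | inf {f g : (Fin n → L) → L} :
      IsLatticePolynomial f → IsLatticePolynomial g →
      IsLatticePolynomial fun x => f x ⊓ g x
  | sup {f g : (Fin n → L) → L} :
      IsLatticePolynomial f → IsLatticePolynomial g →
      IsLatticePolynomial fun x => f x ⊔ g x

/-- Unary lattice polynomial functions: the smallest class of functions `L → L`
containing the identity and constants and closed under pointwise binary meets
and joins. -/
inductive IsUnaryLatticePolynomial : (L → L) → Prop
  | id : IsUnaryLatticePolynomial fun x : L => x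
  | const (c : L) : IsUnaryLatticePolynomial fun _ => c
  | inf {f g : L → L} :
      IsUnaryLatticePolynomial f → IsUnaryLatticePolynomial g →
      IsUnaryLatticePolynomial fun x => f x ⊓ g x
  | sup {f g : L → L} :
      IsUnaryLatticePolynomial f → IsUnaryLatticePolynomial g →
      IsUnaryLatticePolynomial fun x => f x ⊔ g x

/-- `h : L → L` preserves binary meets. -/
def PreservesInf (h : L → L) : Prop := ∀ x y : L, h (x ⊓ y) = h x ⊓ h y

/-- `h : L → L` preserves binary joins. -/
def PreservesSup (h : L → L) : Prop := ∀ x y : L, h (x ⊔ y) = h x ⊔ h y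

/-- Condition (H): `f(x ∧ c̄) = f(x) ∧ c` for all `c ∈ [f(0̄), f(1̄)]`. -/
def CondH {n : ℕ} (f : (Fin n → L) → L) : Prop :=
  ∀ (x : Fin n → L) (c : L), f (fun _ => ⊥) ≤ c → c ≤ f (fun _ => ⊤) →
    (f fun i => x i ⊓ c) = f x ⊓ c

/-- Condition (H*), the dual of (H): `f(x ∨ c̄) = f(x) ∨ c` for all `c ∈ [f(0̄), f(1̄)]`. -/
def CondHDual {n : ℕ} (f : (Fin n → L) → L) : Prop :=
  ∀ (x : Fin n → L) (c : L), f (fun _ => ⊥) ≤ c → c ≤ f (fun _ => ⊤) →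
    (f fun i => x i ⊔ c) = f x ⊔ c

/-- Condition (V): `f(x) = f(x ∧ c̄) ∨ f([x]_c)` for all `c ∈ [f(0̄), f(1̄)]`,
where the `i`-th component of `[x]_c` is `0` if `x i ≤ c`, and `x i` otherwise. -/
def CondV {n : ℕ} (f : (Fin n → L) → L) : Prop :=
  ∀ (x : Fin n → L) (c : L), f (fun _ => ⊥) ≤ c → c ≤ f (fun _ => ⊤) →
    f x = (f fun i => x i ⊓ c) ⊔ (f fun i => if x i ≤ c then ⊥ else x i)

/-- Condition (V*), the dual of (V): `f(x) = f(x ∨ c̄) ∧ f([x]^c)` for all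
`c ∈ [f(0̄), f(1̄)]`, where the `i`-th component of `[x]^c` is `1` if `c ≤ x i`,
and `x i` otherwise. -/
def CondVDual {n : ℕ} (f : (Fin n → L) → L) : Prop :=
  ∀ (x : Fin n → L) (c : L), f (fun _ => ⊥) ≤ c → c ≤ f (fun _ => ⊤) →
    f x = (f fun i => x i ⊔ c) ⊓ (f fun i => if c ≤ x i then ⊤ else x i)

/-- Condition (I): `f(c̄) = c` for all `c ∈ [f(0̄), f(1̄)]`. -/
def CondI {n : ℕ} (f : (Fin n → L) → L) : Prop :=
  ∀ c : L, f (fun _ => ⊥) ≤ c → c ≤ f (fun _ => ⊤) → f (fun _ => c) = c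

/-- A subset `S` of `L` is convex if `a ≤ b ≤ c` with `a, c ∈ S` implies `b ∈ S`. -/
def IsConvexSubset (S : Set L) : Prop :=
  ∀ ⦃a b c : L⦄, a ∈ S → c ∈ S → a ≤ b → b ≤ c → b ∈ S

/-- For every function `g = f_K^a` obtained from `f` by substituting constants for
variables (including `K = ∅`, i.e. `g = f`), the diagonal `δ_g` preserves binary meets.
Here `δ_{f_K^a}(x) = f(y)` where `y i = a i` for `i ∈ K` and `y i = x` otherwise. -/
def DiagSubstPreservesInf {n : ℕ} (f : (Fin n → L) → L) : Prop :=
  ∀ (K : Set (Fin n)) (a : Fin n → L) (x y : L),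
    (f fun i => if i ∈ K then a i else x ⊓ y) =
      (f fun i => if i ∈ K then a i else x) ⊓ (f fun i => if i ∈ K then a i else y)

/-- For every function `g = f_K^a` obtained from `f` by substituting constants for
variables (including `K = ∅`, i.e. `g = f`), the diagonal `δ_g` preserves binary joins. -/
def DiagSubstPreservesSup {n : ℕ} (f : (Fin n → L) → L) : Prop :=
  ∀ (K : Set (Fin n)) (a : Fin n → L) (x y : L),
    (f fun i => if i ∈ K then a i else x ⊔ y) =
      (f fun i => if i ∈ K then a i else x) ⊔ (f fun i => if i ∈ K then a i else y)

end Defs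

/-! Goodstein's normal form: a lattice polynomial function satisfies
`f x = ⋁_S (f(e_S) ⊓ ⋀_{i ∈ S} x i)`, where `e_S` is the `0/1`-vector with support `S`,
so it is determined by its values at the vectors `e_S`. The normal form is preserved by joins
for every function, and by meets for monotone ones, since the meet of the `S`-term of `f` and
the `T`-term of `g` lies below the `(S ∪ T)`-term of `f ⊓ g`. -/

section BoolVec

variable {ι : Type*} [DecidableEq ι] [PartialOrder L] [BoundedOrder L]

def boolVec (S : Finset ι) : ι → L := fun i => if i ∈ S then ⊤ else ⊥

lemma boolVec_eq_bot_or_eq_top (S : Finset ι) (i : ι) :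
    (boolVec S i : L) = ⊥ ∨ (boolVec S i : L) = ⊤ := by
  by_cases hi : i ∈ S <;> simp [boolVec, hi]

lemma boolVec_monotone : Monotone (boolVec : Finset ι → ι → L) := by
  intro S T hST i
  by_cases hi : i ∈ S
  · simp [boolVec, hi, hST hi]
  · simp [boolVec, hi]

end BoolVec

section NormalForm

variable {ι : Type*} [DecidableEq ι] [Fintype ι] [DistribLattice L] [BoundedOrder L]

def dnf (f : (ι → L) → L) (x : ι → L) : L :=
  Finset.univ.sup fun S => f (boolVec S) ⊓ S.inf x

lemma dnf_congr {f g : (ι → L) → L} (h : ∀ S, f (boolVec S) = g (boolVec S)) :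
    dnf f = dnf g := by
  funext x
  simp only [dnf, h]

lemma dnf_mono {f g : (ι → L) → L} (h : ∀ S, f (boolVec S) ≤ g (boolVec S)) (x : ι → L) :
    dnf f x ≤ dnf g x :=
  Finset.sup_mono_fun fun S _ => inf_le_inf_right _ (h S)

lemma dnf_proj (k : ι) (x : ι → L) : dnf (fun y => y k) x = x k := by
  apply le_antisymm
  · refine Finset.sup_le fun S _ => ?_
    by_cases hk : k ∈ S
    · exact inf_le_right.trans (Finset.inf_le hk)
    · simp [boolVec, hk]
  · exact Finset.le_sup_of_le (Finset.mem_univ {k}) (by simp [boolVec])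

lemma dnf_const (c : L) (x : ι → L) : dnf (fun _ => c) x = c :=
  le_antisymm (Finset.sup_le fun _ _ => inf_le_left)
    (Finset.le_sup_of_le (Finset.mem_univ ∅) (by simp))

lemma dnf_sup (f g : (ι → L) → L) (x : ι → L) :
    dnf (fun y => f y ⊔ g y) x = dnf f x ⊔ dnf g x := by
  simp only [dnf, inf_sup_right]
  exact Finset.sup_sup

lemma dnf_inf {f g : (ι → L) → L} (hf : Monotone f) (hg : Monotone g) (x : ι → L) :
    dnf (fun y => f y ⊓ g y) x = dnf f x ⊓ dnf g x := by
  refine le_antisymm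
    (le_inf (dnf_mono (fun _ => inf_le_left) x) (dnf_mono (fun _ => inf_le_right) x)) ?_
  rw [dnf, dnf, Finset.sup_inf_sup]
  refine Finset.sup_le fun ⟨S, T⟩ _ => Finset.le_sup_of_le (Finset.mem_univ (S ∪ T)) ?_
  have hfS : f (boolVec S) ≤ f (boolVec (S ∪ T)) := hf (boolVec_monotone Finset.subset_union_left)
  have hgT : g (boolVec T) ≤ g (boolVec (S ∪ T)) := hg (boolVec_monotone Finset.subset_union_right)
  rw [Finset.inf_union]
  exact le_inf (le_inf (inf_le_left.trans (inf_le_left.trans hfS))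
      (inf_le_right.trans (inf_le_left.trans hgT)))
    (inf_le_inf inf_le_right inf_le_right)

end NormalForm

section LatticePolynomial

variable [DistribLattice L] {n : ℕ}

theorem IsLatticePolynomial.monotone {f : (Fin n → L) → L} (hf : IsLatticePolynomial f) :
    Monotone f := by
  induction hf with
  | proj k => exact fun x y hxy => hxy k
  | const _ => exact monotone_const
  | inf _ _ ihf ihg => exact fun x y hxy => inf_le_inf (ihf hxy) (ihg hxy)
  | sup _ _ ihf ihg => exact fun x y hxy => sup_le_sup (ihf hxy) (ihg hxy)

theorem IsLatticePolynomial.dnf_eq [BoundedOrder L] {f : (Fin n → L) → L}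
    (hf : IsLatticePolynomial f) : dnf f = f := by
  funext x
  induction hf with
  | proj k => exact dnf_proj k x
  | const c => exact dnf_const c x
  | inf hf hg ihf ihg => rw [dnf_inf hf.monotone hg.monotone, ihf, ihg]
  | sup _ _ ihf ihg => rw [dnf_sup, ihf, ihg]

end LatticePolynomial

/-- A lattice polynomial function is uniquely determined by its
restriction to `{0,1}ⁿ`. -/
theorem polynomial_eq_of_eq_on_boolean_vectors
    {L : Type*} [DistribLattice L] [BoundedOrder L] {n : ℕ}
    (f g : (Fin n → L) → L)
    (hf : IsLatticePolynomial f) (hg : IsLatticePolynomial g)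
    (h : ∀ x : Fin n → L, (∀ i, x i = ⊥ ∨ x i = ⊤) → f x = g x) :
    f = g := by
  rw [← hf.dnf_eq, ← hg.dnf_eq]
  exact dnf_congr fun S => h _ (boolVec_eq_bot_or_eq_top S)
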